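/- arXiv:1012.2946 — 5 statements merged into one kernel-verified Lean document; each statement's English description precedes it below -/
import Mathlib

section
/- Let v ∈ ℝ^N be Diophantine and let a : ℤ^N → ℂ be rapidly decreasing, i.e. for every k ∈ ℕ one has sup_{m ∈ ℤ^N} ‖m‖^k |a(m)| < ∞. Define b : ℤ^N → ℂ by b(0) = 0 and b(m) = a(m)/(2π√(−1)·⟨m, v⟩) for m ≠ 0. Then b is rapidly decreasing: for every k ∈ ℕ, sup_{m ∈ ℤ^N} ‖m‖^k |b(m)| < ∞. (Small-divisor estimate: the key step in solving the cohomology equation over a Diophantine linear flow by Fourier series.) -/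
/-- The vector in `EuclideanSpace ℝ (Fin N)` with integer coordinates `m`. -/
noncomputable def intVec {N : ℕ} (m : Fin N → ℤ) : EuclideanSpace ℝ (Fin N) :=
  WithLp.toLp 2 (fun i => (m i : ℝ))

/-- A vector `v ∈ ℝ^N` is Diophantine if there are `C > 0`, `τ > 0` with
`|⟨m, v⟩| ≥ C / ‖m‖^τ` for every nonzero integer vector `m`. -/
def IsDiophantine {N : ℕ} (v : EuclideanSpace ℝ (Fin N)) : Prop :=
  ∃ C > (0 : ℝ), ∃ τ > (0 : ℝ), ∀ m : Fin N → ℤ, m ≠ 0 →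
    C / ‖intVec m‖ ^ τ ≤ |(inner ℝ (intVec m) v : ℝ)|

/-- A family of complex numbers indexed by `ℤ^N` is rapidly decreasing if
`sup_m ‖m‖^k |a m| < ∞` for every `k`. -/
def RapidlyDecreasing {N : ℕ} (a : (Fin N → ℤ) → ℂ) : Prop :=
  ∀ k : ℕ, ∃ B : ℝ, ∀ m : Fin N → ℤ, ‖intVec m‖ ^ k * ‖a m‖ ≤ B

lemma one_le_norm_intVec {N : ℕ} (m : Fin N → ℤ) (hm : m ≠ 0) : 1 ≤ ‖intVec m‖ := by
  obtain ⟨i, hi⟩ := Function.ne_iff.mp hm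
  have h1 : (1 : ℝ) ≤ |(m i : ℝ)| := by
    have : (1 : ℤ) ≤ |m i| := Int.one_le_abs (by simpa using hi)
    calc (1:ℝ) ≤ ((|m i| : ℤ) : ℝ) := by exact_mod_cast this
    _ = |(m i : ℝ)| := by push_cast; rfl
  calc (1:ℝ) ≤ |(m i : ℝ)| := h1
    _ = ‖(intVec m) i‖ := by simp [intVec]
    _ ≤ ‖intVec m‖ := by
        rw [EuclideanSpace.norm_eq]
        have h2 : ‖(intVec m) i‖ ^ 2 ≤ ∑ j, ‖(intVec m) j‖ ^ 2 :=
          Finset.single_le_sum (f := fun j => ‖(intVec m) j‖ ^ 2)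
            (fun j _ => sq_nonneg _) (Finset.mem_univ i)
        calc ‖(intVec m) i‖ = Real.sqrt (‖(intVec m) i‖ ^ 2) :=
              (Real.sqrt_sq (norm_nonneg _)).symm
          _ ≤ Real.sqrt (∑ j, ‖(intVec m) j‖ ^ 2) := Real.sqrt_le_sqrt h2

/-- **Small-divisor estimate**: dividing the Fourier coefficients of a smooth function
by the small divisors `2π√-1⟨m, v⟩` of a Diophantine vector `v` preserves rapid decay. -/
theorem small_divisor_estimate (N : ℕ) (v : EuclideanSpace ℝ (Fin N))
    (hv : IsDiophantine v)
    (a b : (Fin N → ℤ) → ℂ)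
    (ha : RapidlyDecreasing a)
    (hb0 : b 0 = 0)
    (hb : ∀ m : Fin N → ℤ, m ≠ 0 →
      b m = a m / (2 * Real.pi * Complex.I * ((inner ℝ (intVec m) v : ℝ) : ℂ))) :
    RapidlyDecreasing b := by
  obtain ⟨C, hC, τ, hτ, hdio⟩ := hv
  intro k
  set n := ⌈τ⌉₊ with hn
  obtain ⟨B, hB⟩ := ha (k + n)
  refine ⟨max 0 (B / (2 * Real.pi * C)), fun m => ?_⟩
  by_cases hm : m = 0
  · subst hm
    simp [hb0, le_max_left]
  · set r := ‖intVec m‖ with hr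
    have hr1 : 1 ≤ r := one_le_norm_intVec m hm
    have hrpos : 0 < r := lt_of_lt_of_le one_pos hr1
    set x : ℝ := (inner ℝ (intVec m) v : ℝ) with hxdef
    have hx : C / r ^ τ ≤ |x| := hdio m hm
    have hxpos : 0 < |x| :=
      lt_of_lt_of_le (div_pos hC (Real.rpow_pos_of_pos hrpos τ)) hx
    have habs : ‖b m‖ = ‖a m‖ / (2 * Real.pi * |x|) := by
      have hd : ‖(2 * Real.pi * Complex.I * (x : ℂ))‖ = 2 * Real.pi * |x| := by
        rw [norm_mul, norm_mul, norm_mul, Complex.norm_I, Complex.norm_two, Complex.norm_real,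
          Complex.norm_real, Real.norm_eq_abs, Real.norm_eq_abs, abs_of_pos Real.pi_pos]
        ring
      rw [hb m hm, norm_div, ← hxdef, hd]
    have hBm : r ^ (k + n) * ‖a m‖ ≤ B := hB m
    have hrn : r ^ τ ≤ r ^ n := by
      calc r ^ τ ≤ r ^ (n : ℝ) :=
        Real.rpow_le_rpow_of_exponent_le hr1 (Nat.le_ceil τ)
      _ = r ^ n := by rw [Real.rpow_natCast]
    have hA : 0 ≤ ‖a m‖ := norm_nonneg _
    have key : r ^ k * (‖a m‖ / (2 * Real.pi * |x|)) ≤ B / (2 * Real.pi * C) := by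
      rw [← mul_div_assoc, div_le_div_iff₀ (by positivity) (by positivity)]
      have h1 : C ≤ |x| * r ^ τ := by
        rw [div_le_iff₀ (Real.rpow_pos_of_pos hrpos τ)] at hx
        linarith
      set A := ‖a m‖
      have h2 : r ^ k * A * C ≤ r ^ k * A * (|x| * r ^ τ) :=
        mul_le_mul_of_nonneg_left h1 (by positivity)
      have h3 : r ^ k * A * (|x| * r ^ τ) ≤ r ^ k * A * (|x| * r ^ n) := by
        have : |x| * r ^ τ ≤ |x| * r ^ n :=
          mul_le_mul_of_nonneg_left hrn (le_of_lt hxpos)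
        exact mul_le_mul_of_nonneg_left this (by positivity)
      have h4 : r ^ k * A * (|x| * r ^ n) = |x| * (r ^ (k + n) * A) := by
        rw [pow_add]; ring
      have h5 : |x| * (r ^ (k + n) * A) ≤ |x| * B :=
        mul_le_mul_of_nonneg_left hBm (le_of_lt hxpos)
      nlinarith [Real.pi_pos]
    rw [habs]
    exact le_trans key (le_max_right _ _)
end

section
/- Let M be a compact C^∞ manifold without boundary (finite-dimensional, Hausdorff, second countable) and let φ be a smooth flow on M. Suppose there are points x₁, x₂ ∈ M and times T₁, T₂ > 0 with φ(T₁, x₁) = x₁ and φ(T₂, x₂) = x₂ such that the orbits {φ(t, x₁) : t ∈ ℝ} and {φ(t, x₂) : t ∈ ℝ} are disjoint. Then there exists a C^∞ function f : M → ℝ such that there is no pair (g, c) of a C^∞ function g : M → ℝ and a constant c ∈ ℝ with the property that for every x ∈ M the function t ↦ g(φ(t, x)) has derivative f(x) − c at t = 0. (A locally free flow with two distinct periodic orbits has an unsolvable cohomology equation, hence is not parameter rigid.) -/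
open Manifold

/-- A smooth flow on a compact manifold with two distinct (disjoint) periodic orbits
has an unsolvable cohomology equation: there is a smooth function `f` for which no
smooth `g` and constant `c` satisfy `f = X₀ g + c`, where `X₀` is the generator. -/
theorem not_parameter_rigid_of_two_periodic_orbits
    {E : Type*} [NormedAddCommGroup E] [NormedSpace ℝ E] [FiniteDimensional ℝ E]
    {H : Type*} [TopologicalSpace H] (I : ModelWithCorners ℝ E H) [I.Boundaryless]
    {M : Type*} [TopologicalSpace M] [ChartedSpace H M] [IsManifold I (⊤ : ℕ∞) M]
    [CompactSpace M] [T2Space M] [SecondCountableTopology M]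
    (φ : ℝ × M → M)
    (hφ : ContMDiff ((𝓘(ℝ, ℝ)).prod I) I (⊤ : ℕ∞) φ)
    (hφ0 : ∀ x : M, φ (0, x) = x)
    (hφadd : ∀ (s t : ℝ) (x : M), φ (s + t, x) = φ (s, φ (t, x)))
    (x₁ x₂ : M) (T₁ T₂ : ℝ) (hT₁ : 0 < T₁) (hT₂ : 0 < T₂)
    (hper₁ : φ (T₁, x₁) = x₁) (hper₂ : φ (T₂, x₂) = x₂)
    (hdisj : Disjoint (Set.range fun t : ℝ => φ (t, x₁))
      (Set.range fun t : ℝ => φ (t, x₂))) :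
    ∃ f : M → ℝ, ContMDiff I 𝓘(ℝ, ℝ) (⊤ : ℕ∞) f ∧
      ¬ ∃ (g : M → ℝ) (c : ℝ), ContMDiff I 𝓘(ℝ, ℝ) (⊤ : ℕ∞) g ∧
        ∀ x : M, HasDerivAt (fun t : ℝ => g (φ (t, x))) (f x - c) 0 := by
  have hcont : Continuous φ := hφ.continuous
  have horbcont : ∀ x : M, Continuous fun t : ℝ => φ (t, x) := fun x =>
    hcont.comp (continuous_id.prodMk continuous_const)
  -- the two orbits are compact (hence closed) sets
  have hper : ∀ (x : M) (T : ℝ), φ (T, x) = x →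
      Function.Periodic (fun t : ℝ => φ (t, x)) T := by
    intro x T hx t
    simp only []
    rw [hφadd t T x, hx]
  have hclosed : ∀ (x : M) (T : ℝ), 0 < T → φ (T, x) = x →
      IsClosed (Set.range fun t : ℝ => φ (t, x)) := by
    intro x T hT hx
    rw [← (hper x T hx).image_Icc hT 0]
    exact (isCompact_Icc.image (horbcont x)).isClosed
  obtain ⟨f, hf0, hf1, -⟩ := exists_contMDiffMap_zero_one_of_isClosed (n := ⊤) I
    (hclosed x₁ T₁ hT₁ hper₁) (hclosed x₂ T₂ hT₂ hper₂) hdisj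
  refine ⟨f, f.contMDiff, ?_⟩
  rintro ⟨g, c, hg, hgc⟩
  -- derivative at any time
  have key : ∀ (x : M) (t : ℝ),
      HasDerivAt (fun s : ℝ => g (φ (s, x))) (f (φ (t, x)) - c) t := by
    intro x t
    have h0 : HasDerivAt (fun s : ℝ => g (φ (s, φ (t, x)))) (f (φ (t, x)) - c) 0 :=
      hgc (φ (t, x))
    have hsub : HasDerivAt (fun s : ℝ => s - t) 1 t := by
      simpa using (hasDerivAt_id t).sub_const t
    have h0' : HasDerivAt (fun s : ℝ => g (φ (s, φ (t, x)))) (f (φ (t, x)) - c)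
        ((fun s : ℝ => s - t) t) := by simpa using h0
    have hc := HasDerivAt.comp (h := fun s : ℝ => s - t) t h0' hsub
    have heq : ((fun s : ℝ => g (φ (s, φ (t, x)))) ∘ fun s : ℝ => s - t)
        = fun s : ℝ => g (φ (s, x)) := by
      funext s
      simp only [Function.comp_apply]
      rw [← hφadd, sub_add_cancel]
    rw [heq, mul_one] at hc
    exact hc
  -- fundamental theorem of calculus along a periodic orbit
  have hint : ∀ (x : M) (T : ℝ), φ (T, x) = x →
      ∫ t in (0:ℝ)..T, (f (φ (t, x)) - c) = 0 := by
    intro x T hx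
    rw [intervalIntegral.integral_eq_sub_of_hasDerivAt
      (fun t _ => key x t)
      (((f.contMDiff.continuous.comp (horbcont x)).sub continuous_const).intervalIntegrable 0 T)]
    rw [hx, hφ0 x, sub_self]
  have h1 := hint x₁ T₁ hper₁
  have h2 := hint x₂ T₂ hper₂
  have e1 : ∀ t : ℝ, f (φ (t, x₁)) = 0 := fun t => hf0 ⟨t, rfl⟩
  have e2 : ∀ t : ℝ, f (φ (t, x₂)) = 1 := fun t => hf1 ⟨t, rfl⟩
  have h1' : T₁ * c = 0 := by
    have := h1
    simp only [e1, zero_sub, intervalIntegral.integral_neg,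
      intervalIntegral.integral_const, smul_eq_mul, sub_zero, neg_eq_zero] at this
    exact this
  have h2' : T₂ * (1 - c) = 0 := by
    have := h2
    simp only [e2, intervalIntegral.integral_const, smul_eq_mul, sub_zero] at this
    exact this
  have hc0 : c = 0 := by
    rcases mul_eq_zero.1 h1' with h | h
    · exact absurd h hT₁.ne'
    · exact h
  rcases mul_eq_zero.1 h2' with h | h
  · exact absurd h hT₂.ne'
  · rw [hc0] at h; norm_num at h
end

section
/- Let M be a nonempty compact topological space, φ : ℝ × M → M a map with φ(0, x) = x for all x, g : M → ℝ a continuous function, f : M → ℝ a function with f(x) ≠ 0 for every x ∈ M, and c ∈ ℝ. Suppose that for every x ∈ M the function t ↦ g(φ(t, x)) has derivative f(x) − c at t = 0. Then c ≠ 0. (At a maximum point of g the derivative along the flow vanishes, so c = f(x) ≠ 0; this is the key step in showing that a flow whose cohomology equation is always solvable is parameter rigid.) -/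
/-- If `(g, c)` solves the cohomology equation `f = Xg + c` over a flow on a nonempty
compact space and `f` vanishes nowhere, then `c ≠ 0` (at a maximum point of `g` the
derivative along the flow vanishes). -/
theorem cohomology_constant_ne_zero {M : Type*} [TopologicalSpace M]
    [CompactSpace M] [Nonempty M]
    (φ : ℝ × M → M) (hφ0 : ∀ x : M, φ (0, x) = x)
    (g : M → ℝ) (hg : Continuous g)
    (f : M → ℝ) (hf : ∀ x : M, f x ≠ 0) (c : ℝ)
    (hderiv : ∀ x : M, HasDerivAt (fun t : ℝ => g (φ (t, x))) (f x - c) 0) :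
    c ≠ 0 := by
  intro hc
  obtain ⟨x₀, hx₀⟩ := IsCompact.exists_isMaxOn isCompact_univ Set.univ_nonempty
    (hg.continuousOn)
  have hmax : IsLocalMax (fun t : ℝ => g (φ (t, x₀))) 0 := by
    apply Filter.Eventually.of_forall
    intro t
    simpa [hφ0] using hx₀.2 (Set.mem_univ (φ (t, x₀)))
  have := hmax.hasDerivAt_eq_zero (hderiv x₀)
  exact hf x₀ (by linarith)
end

section
/- Let v₁, …, v_p ∈ ℝ^N be vectors such that no nonzero m ∈ ℤ^N satisfies ⟨m, v_i⟩ = 0 for every i = 1, …, p. If f : ℝ^N → ℝ is a C^∞ ℤ^N-periodic function with Df(x)[v_i] = 0 for every x ∈ ℝ^N and every i = 1, …, p, then f is constant. (The zeroth leafwise cohomology of the linear foliation on 𝕋^N spanned by v₁, …, v_p is ℝ: every smooth function constant on each leaf is constant, since the foliation has dense leaves.) -/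
open MeasureTheory Complex Real Topology

namespace LeafwiseH0

local instance : Fact ((0:ℝ) < 1) := ⟨one_pos⟩

/-- The `N`-dimensional torus. -/
abbrev Tor (N : ℕ) := Fin N → AddCircle (1:ℝ)

variable {N : ℕ}

/-- Projection of Euclidean space onto the torus. -/
noncomputable def tpi {N : ℕ} (x : EuclideanSpace ℝ (Fin N)) : Tor N := fun i => ↑(x i)

theorem tpi_add (x y : EuclideanSpace ℝ (Fin N)) : tpi (x + y) = tpi x + tpi y := rfl

theorem tpi_oqm : IsOpenQuotientMap (tpi (N := N)) := by
  have h1 : IsOpenQuotientMap (Pi.map (fun (i : Fin N) (t : ℝ) => (↑t : AddCircle (1:ℝ)))) :=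
    IsOpenQuotientMap.piMap (fun i => QuotientAddGroup.isOpenQuotientMap_mk)
  have h2 : IsOpenQuotientMap (⇑(EuclideanSpace.equiv (Fin N) ℝ).toHomeomorph) := by
    exact ⟨(EuclideanSpace.equiv (Fin N) ℝ).toHomeomorph.surjective,
      (EuclideanSpace.equiv (Fin N) ℝ).toHomeomorph.continuous,
      (EuclideanSpace.equiv (Fin N) ℝ).toHomeomorph.isOpenMap⟩
  exact h1.comp h2

theorem tpi_quotientMap : IsQuotientMap (tpi (N := N)) := tpi_oqm.isQuotientMap

theorem tpi_eq_iff {x y : EuclideanSpace ℝ (Fin N)} (h : tpi x = tpi y) :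
    ∃ m : Fin N → ℤ, y = x + intVec m := by
  have h' : ∀ i, ∃ k : ℤ, y i = x i + k := by
    intro i
    have h2 : (↑(y i) : AddCircle (1:ℝ)) = ↑(x i) := (congrFun h i).symm
    rw [QuotientAddGroup.eq_iff_sub_mem] at h2
    obtain ⟨k, hk⟩ := AddSubgroup.mem_zmultiples_iff.mp h2
    simp only [zsmul_eq_mul, mul_one] at hk
    exact ⟨k, by linarith⟩
  choose m hm using h'
  exact ⟨m, PiLp.ext fun i => by simp [intVec, hm i]⟩

/-- The characters of the torus. -/
noncomputable def tchar (m : Fin N → ℤ) : C(Tor N, ℂ) :=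
  ⟨fun q => ∏ i, fourier (m i) (q i),
   continuous_finset_prod _ fun i _ =>
     (fourier (m i)).continuous.comp (continuous_apply i)⟩

theorem fourier_pt_add {T : ℝ} [Fact (0 < T)] (n : ℤ) (x y : AddCircle T) :
    fourier n (x + y) = fourier n x * fourier n y := by
  rw [fourier_apply, fourier_apply, fourier_apply, smul_add, AddCircle.toCircle_add]
  rfl

theorem tchar_add (m : Fin N → ℤ) (q a : Tor N) :
    tchar m (q + a) = tchar m q * tchar m a := by
  simp only [tchar, ContinuousMap.coe_mk, Pi.add_apply, fourier_pt_add]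
  rw [Finset.prod_mul_distrib]

theorem tchar_zero' : tchar (N := N) 0 = 1 := by
  ext q
  simp [tchar, fourier_zero]

theorem tchar_mul' (m m' : Fin N → ℤ) : tchar m * tchar m' = tchar (m + m') := by
  ext q
  simp only [tchar, ContinuousMap.mul_apply, ContinuousMap.coe_mk, Pi.add_apply, fourier_add]
  rw [Finset.prod_mul_distrib]

theorem tchar_star' (m : Fin N → ℤ) : star (tchar m) = tchar (-m) := by
  ext q
  simp only [tchar, ContinuousMap.star_apply, ContinuousMap.coe_mk, Pi.neg_apply, fourier_neg]
  rw [star_prod]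
  rfl

theorem tchar_tpi (m : Fin N → ℤ) (x : EuclideanSpace ℝ (Fin N)) :
    tchar m (tpi x) = Complex.exp (2 * π * Complex.I * (inner ℝ (intVec m) x : ℝ)) := by
  simp only [tchar, tpi, ContinuousMap.coe_mk, fourier_coe_apply]
  rw [← Complex.exp_sum]
  congr 1
  rw [PiLp.inner_apply]
  push_cast
  simp only [RCLike.inner_apply, conj_trivial]
  rw [Finset.mul_sum]
  refine Finset.sum_congr rfl fun i _ => ?_
  simp [intVec]
  ring

/-- The linear span of characters. -/
noncomputable def tspan (N : ℕ) : Submodule ℂ C(Tor N, ℂ) :=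
  Submodule.span ℂ (Set.range (tchar (N := N)))

theorem tspan_mul_mem {a b : C(Tor N, ℂ)} (ha : a ∈ tspan N) (hb : b ∈ tspan N) :
    a * b ∈ tspan N := by
  have h : tspan N * tspan N ≤ tspan N := by
    rw [tspan, Submodule.span_mul_span]
    refine Submodule.span_le.mpr ?_
    rintro x ⟨u, ⟨m, rfl⟩, w, ⟨m', rfl⟩, rfl⟩
    show tchar m * tchar m' ∈ _
    rw [tchar_mul']
    exact Submodule.subset_span ⟨m + m', rfl⟩
  exact h (Submodule.mul_mem_mul ha hb)

theorem tspan_star_mem {a : C(Tor N, ℂ)} (ha : a ∈ tspan N) : star a ∈ tspan N := by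
  induction ha using Submodule.span_induction with
  | mem x hx => obtain ⟨m, rfl⟩ := hx; rw [tchar_star']; exact Submodule.subset_span ⟨-m, rfl⟩
  | zero => simp
  | add x y _ _ hx hy => rw [star_add]; exact (tspan N).add_mem hx hy
  | smul c x _ hx => rw [star_smul]; exact (tspan N).smul_mem _ hx

/-- The star subalgebra of trigonometric polynomials. -/
noncomputable def talg (N : ℕ) : StarSubalgebra ℂ C(Tor N, ℂ) where
  carrier := tspan N
  mul_mem' := tspan_mul_mem
  one_mem' := by rw [← tchar_zero']; exact Submodule.subset_span ⟨0, rfl⟩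
  add_mem' := fun ha hb => (tspan N).add_mem ha hb
  zero_mem' := (tspan N).zero_mem
  algebraMap_mem' := fun c => by
    have h : (algebraMap ℂ C(Tor N, ℂ)) c = c • 1 := by
      simp [Algebra.algebraMap_eq_smul_one]
    show (algebraMap ℂ C(Tor N, ℂ)) c ∈ tspan N
    rw [h, ← tchar_zero']
    exact (tspan N).smul_mem _ (Submodule.subset_span ⟨0, rfl⟩)
  star_mem' := tspan_star_mem

theorem talg_separates : (talg N).SeparatesPoints := by
  intro q q' hqq'
  have hex : ∃ i, q i ≠ q' i := by
    by_contra h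
    push_neg at h
    exact hqq' (funext h)
  obtain ⟨i, hi⟩ := hex
  refine ⟨_, ⟨tchar (Pi.single i 1), Submodule.subset_span ⟨_, rfl⟩, rfl⟩, ?_⟩
  have key : ∀ r : Tor N, tchar (Pi.single i 1) r = AddCircle.toCircle (r i) := by
    intro r
    simp only [tchar, ContinuousMap.coe_mk]
    rw [Finset.prod_eq_single i]
    · rw [Pi.single_eq_same, fourier_one]
    · intro j _ hj
      rw [Pi.single_eq_of_ne hj, fourier_zero]
    · intro h; exact absurd (Finset.mem_univ i) h
  simp only [key]
  intro h
  exact hi (AddCircle.injective_toCircle one_ne_zero (Subtype.coe_injective h))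

theorem talg_dense : (talg N).topologicalClosure = ⊤ :=
  ContinuousMap.starSubalgebra_topologicalClosure_eq_top_of_separatesPoints _ talg_separates

theorem tspan_approx (G : C(Tor N, ℂ)) {ε : ℝ} (hε : 0 < ε) :
    ∃ P ∈ tspan N, ‖G - P‖ < ε := by
  have hG : G ∈ (talg N).topologicalClosure := by rw [talg_dense]; trivial
  have hG' : G ∈ closure ((talg N) : Set C(Tor N, ℂ)) := hG
  rw [Metric.mem_closure_iff] at hG'
  obtain ⟨P, hP, hd⟩ := hG' ε hε
  exact ⟨P, hP, by rwa [← dist_eq_norm]⟩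

instance : IsProbabilityMeasure (volume : Measure (AddCircle (1:ℝ))) :=
  ⟨by rw [AddCircle.measure_univ]; norm_num⟩

theorem tor_integrable {E : Type*} [NormedAddCommGroup E] (H : Tor N → E)
    (hH : Continuous H) : Integrable H volume :=
  hH.integrable_of_hasCompactSupport (IsCompact.of_isClosed_subset isCompact_univ
    (isClosed_tsupport H) (Set.subset_univ _))

/-- If a continuous function is multiplied by `c ≠ 1` under translation by `a`,
its integral vanishes. -/
theorem tor_integral_zero (H : Tor N → ℂ) (a : Tor N) (c : ℂ)
    (hc : c ≠ 1) (hinv : ∀ q, H (q + a) = c * H q) : ∫ q, H q = 0 := by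
  have h1 : ∫ q, H (q + a) = ∫ q, H q := by
    simpa using integral_add_right_eq_self H a
  have h2 : ∫ q, H (q + a) = c * ∫ q, H q := by
    simp_rw [hinv]
    rw [integral_const_mul]
  have h3 : (c - 1) * ∫ q, H q = 0 := by rw [sub_mul, one_mul, ← h2, h1, sub_self]
  rcases mul_eq_zero.mp h3 with h | h
  · exact absurd (sub_eq_zero.mp h) hc
  · exact h

theorem inner_sum_smul {N p : ℕ} (x : EuclideanSpace ℝ (Fin N))
    (v : Fin p → EuclideanSpace ℝ (Fin N)) (c : Fin p → ℝ) :
    (inner ℝ x (∑ i, c i • v i) : ℝ) = ∑ i, c i * (inner ℝ x (v i) : ℝ) := by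
  rw [inner_sum]
  exact Finset.sum_congr rfl fun i _ => real_inner_smul_right _ _ _

theorem exists_good_direction (N p : ℕ) (v : Fin p → EuclideanSpace ℝ (Fin N))
    (hv : ∀ m : Fin N → ℤ, m ≠ 0 → ∃ i : Fin p, (inner ℝ (intVec m) (v i) : ℝ) ≠ 0) :
    ∃ c : Fin p → ℝ, ∀ m : Fin N → ℤ, m ≠ 0 →
      (inner ℝ (intVec m) (∑ i, c i • v i) : ℝ) ≠ 0 := by
  have key : ∀ (m : Fin N → ℤ) (c : Fin p → ℝ),
      (inner ℝ (intVec m) (∑ i, c i • v i) : ℝ) = ∑ i, c i * (inner ℝ (intVec m) (v i) : ℝ) :=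
    fun m c => inner_sum_smul _ _ _
  set U : {m : Fin N → ℤ // m ≠ 0} → Set (Fin p → ℝ) :=
    fun m => {c | (∑ i, c i * (inner ℝ (intVec m.1) (v i) : ℝ)) ≠ 0} with hU
  have hopen : ∀ m, IsOpen (U m) := by
    intro m
    apply isOpen_ne.preimage
    exact continuous_finset_sum _ fun i _ => (continuous_apply i).mul continuous_const
  have hdense : ∀ m, Dense (U m) := by
    intro ⟨m, hm⟩
    obtain ⟨i₀, hi₀⟩ := hv m hm
    rw [Metric.dense_iff]
    intro c ε hε
    by_cases hc : (∑ i, c i * (inner ℝ (intVec m) (v i) : ℝ)) ≠ 0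
    · exact ⟨c, Metric.mem_ball_self hε, hc⟩
    push_neg at hc
    set c' : Fin p → ℝ := Function.update c i₀ (c i₀ + ε / 2) with hc'
    refine ⟨c', ?_, ?_⟩
    · rw [Metric.mem_ball, dist_comm, dist_pi_lt_iff hε]
      intro i
      rcases eq_or_ne i i₀ with rfl | h
      · simp only [hc', Function.update_self]
        rw [Real.dist_eq, show c i - (c i + ε / 2) = -(ε/2) by ring, abs_neg,
          abs_of_pos (by linarith)]
        linarith
      · simp [hc', Function.update_of_ne h, hε]
    · show (∑ i, c' i * (inner ℝ (intVec m) (v i) : ℝ)) ≠ 0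
      have hexp : (∑ i, c' i * (inner ℝ (intVec m) (v i) : ℝ))
          = (∑ i, c i * (inner ℝ (intVec m) (v i) : ℝ)) + (ε / 2) * (inner ℝ (intVec m) (v i₀) : ℝ) := by
        rw [show (∑ i, c i * (inner ℝ (intVec m) (v i) : ℝ)) + (ε / 2) * (inner ℝ (intVec m) (v i₀) : ℝ)
            = ∑ i, (c i * (inner ℝ (intVec m) (v i) : ℝ) +
              (if i = i₀ then (ε/2) * (inner ℝ (intVec m) (v i) : ℝ) else 0)) by
          rw [Finset.sum_add_distrib, Finset.sum_ite_eq' Finset.univ i₀]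
          simp]
        refine Finset.sum_congr rfl fun i _ => ?_
        rcases eq_or_ne i i₀ with rfl | h
        · rw [hc', Function.update_self, if_pos rfl]; ring
        · simp only [hc', Function.update_of_ne h, if_neg h, add_zero]
      rw [hexp, hc, zero_add]
      exact mul_ne_zero (by linarith) hi₀
  have hd : Dense (⋂ m, U m) := dense_iInter_of_isOpen hopen hdense
  obtain ⟨c, hc⟩ := hd.nonempty
  refine ⟨c, fun m hm => ?_⟩
  rw [key]
  exact Set.mem_iInter.mp hc ⟨m, hm⟩

theorem const_along {N : ℕ} (f : EuclideanSpace ℝ (Fin N) → ℝ)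
    (hdiff : Differentiable ℝ f) (w : EuclideanSpace ℝ (Fin N))
    (hw : ∀ z, fderiv ℝ f z w = 0) (x : EuclideanSpace ℝ (Fin N)) (t : ℝ) :
    f (x + t • w) = f x := by
  have hg : ∀ s : ℝ, HasDerivAt (fun t : ℝ => f (x + t • w)) 0 s := by
    intro s
    have h1 : HasDerivAt (fun t : ℝ => x + t • w) w s := by
      simpa using ((hasDerivAt_id s).smul_const w).const_add x
    have h2 := ((hdiff (x + s • w)).hasFDerivAt).comp_hasDerivAt s h1
    rw [hw] at h2
    exact h2
  have hconst := is_const_of_deriv_eq_zero (f := fun t : ℝ => f (x + t • w))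
    (fun s => (hg s).differentiableAt) (fun s => (hg s).deriv) t 0
  simpa using hconst

end LeafwiseH0

open LeafwiseH0

/-- The zeroth leafwise cohomology of a linear foliation with dense leaves on `𝕋^N`
is `ℝ`: if no nonzero integer vector is orthogonal to all of `v₁, …, v_p`, then every
smooth `ℤ^N`-periodic function whose derivative along each `v_i` vanishes is constant. -/
theorem leafwise_H0_of_dense_linear_foliation (N p : ℕ)
    (v : Fin p → EuclideanSpace ℝ (Fin N))
    (hv : ∀ m : Fin N → ℤ, m ≠ 0 → ∃ i : Fin p, (inner ℝ (intVec m) (v i) : ℝ) ≠ 0)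
    (f : EuclideanSpace ℝ (Fin N) → ℝ)
    (hf : ContDiff ℝ (⊤ : ℕ∞) f)
    (hfper : ∀ (m : Fin N → ℤ) (x : EuclideanSpace ℝ (Fin N)), f (x + intVec m) = f x)
    (hflat : ∀ (x : EuclideanSpace ℝ (Fin N)) (i : Fin p), fderiv ℝ f x (v i) = 0) :
    ∀ x y : EuclideanSpace ℝ (Fin N), f x = f y := by
  haveI : Fact ((0:ℝ) < 1) := ⟨one_pos⟩
  -- Step 1: a single direction `w` along which `f` is constant, with dense line
  obtain ⟨c, hc⟩ := exists_good_direction N p v hv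
  set w : EuclideanSpace ℝ (Fin N) := ∑ i, c i • v i with hw
  have hdiff : Differentiable ℝ f := hf.differentiable (by simp)
  have hwflat : ∀ z, fderiv ℝ f z w = 0 := by
    intro z
    rw [hw, map_sum]
    simp only [ContinuousLinearMap.map_smul, hflat, smul_zero, Finset.sum_const_zero]
  have hlaw : ∀ z t, f (z + t • w) = f z := fun z t => const_along f hdiff w hwflat z t
  -- Step 2: descend to the torus
  set F : Tor N → ℝ := fun q => f (Function.surjInv tpi_oqm.surjective q) with hF
  have hFπ : ∀ z, F (tpi z) = f z := by
    intro z
    have h1 : tpi (Function.surjInv tpi_oqm.surjective (tpi z)) = tpi z :=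
      Function.surjInv_eq tpi_oqm.surjective (tpi z)
    obtain ⟨m, hm⟩ := tpi_eq_iff h1
    have h2 : f z = f (Function.surjInv tpi_oqm.surjective (tpi z)) := by
      conv_lhs => rw [hm]
      exact hfper m _
    rw [h2]
  have hFtpi : F ∘ tpi = f := funext hFπ
  have hFcont : Continuous F := by
    rw [tpi_quotientMap.continuous_iff, hFtpi]
    exact hf.continuous
  have hFinv : ∀ q (t : ℝ), F (q + tpi (t • w)) = F q := by
    intro q t
    obtain ⟨z, rfl⟩ := tpi_oqm.surjective q
    rw [← tpi_add, hFπ, hFπ, hlaw]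
  -- Step 3: all nontrivial Fourier coefficients vanish
  set c₀ : ℝ := ∫ q, F q with hc₀
  set G : C(Tor N, ℂ) := ⟨fun q => ((F q : ℂ) - (c₀ : ℂ)),
    ((Complex.continuous_ofReal.comp hFcont).sub continuous_const)⟩ with hG
  have hGinv : ∀ q (t : ℝ), G (q + tpi (t • w)) = G q := by
    intro q t
    simp only [hG, ContinuousMap.coe_mk, hFinv]
  have hGchar : ∀ m : Fin N → ℤ, (∫ q, G q * tchar m q) = 0 := by
    intro m
    rcases eq_or_ne m 0 with rfl | hm
    · have h1 : ∀ q : Tor N, G q * tchar 0 q = G q := by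
        intro q
        rw [tchar_zero']
        simp
      simp only [h1]
      have hi1 : Integrable (fun q : Tor N => ((F q : ℝ) : ℂ)) volume :=
        tor_integrable _ (Complex.continuous_ofReal.comp hFcont)
      have h2 : (∫ q, G q) = ((∫ q, F q : ℝ) : ℂ) - (c₀ : ℂ) := by
        rw [hG]
        simp only [ContinuousMap.coe_mk]
        rw [integral_sub hi1 (integrable_const _)]
        have h4 : (∫ q : Tor N, ((F q : ℝ) : ℂ)) = ((∫ q : Tor N, F q : ℝ) : ℂ) :=
          integral_ofReal
        rw [h4, integral_const]
        simp
      rw [h2, ← hc₀, sub_self]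
    · -- use the invariance along a suitable translation
      have hinner : (inner ℝ (intVec m) w : ℝ) ≠ 0 := hc m hm
      obtain ⟨r, hr⟩ : ∃ r : ℝ, (inner ℝ (intVec m) w : ℝ) = r := ⟨_, rfl⟩
      rw [hr] at hinner
      set t₀ : ℝ := 1 / (2 * r) with ht₀
      set a : Tor N := tpi (t₀ • w) with ha
      have hval : tchar m a = -1 := by
        rw [ha, tchar_tpi]
        have h3 : (inner ℝ (intVec m) (t₀ • w) : ℝ) = t₀ * (inner ℝ (intVec m) w : ℝ) :=
          real_inner_smul_right _ _ _
        rw [h3, hr, ht₀]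
        rw [show 1 / (2 * r) * r = 1/2 by field_simp]
        rw [show ((2:ℂ) * (π:ℂ) * Complex.I * ((1/2 : ℝ) : ℂ)) = (π:ℂ) * Complex.I by
          push_cast; ring]
        exact Complex.exp_pi_mul_I
      refine tor_integral_zero _ a (-1) (by norm_num) ?_
      intro q
      rw [hGinv _ t₀, tchar_add, hval]
      ring
  have hGspan : ∀ P ∈ tspan N, (∫ q, G q * P q) = 0 := by
    intro P hP
    induction hP using Submodule.span_induction with
    | mem x hx => obtain ⟨m, rfl⟩ := hx; exact hGchar m
    | zero => simp
    | add x y hx hy ihx ihy =>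
      have hix := tor_integrable _ (G.continuous.mul x.continuous)
      have hiy := tor_integrable _ (G.continuous.mul y.continuous)
      have : ∀ q, G q * (x + y) q = G q * x q + G q * y q := by
        intro q; simp [mul_add]
      simp only [this]
      rw [integral_add (f := fun q => G q * x q) (g := fun q => G q * y q) hix hiy, ihx, ihy, add_zero]
    | smul r x hx ihx =>
      have : ∀ q, G q * (r • x) q = r * (G q * x q) := by
        intro q; simp; ring
      simp only [this]
      rw [integral_const_mul, ihx, mul_zero]
  -- Step 4: `∫ ‖G‖² = 0` by Stone-Weierstrass approximation
  have hGG : (∫ q, G q * G q) = 0 := by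
    by_contra hne
    have hnorm : ∀ ε : ℝ, 0 < ε → ‖∫ q, G q * G q‖ ≤ ‖G‖ * ε := by
      intro ε hε
      obtain ⟨P, hP, hPd⟩ := tspan_approx G hε
      have hsplit : (∫ q, G q * G q) = ∫ q, G q * (G q - P q) := by
        have h1 : ∀ q, G q * G q = G q * (G q - P q) + G q * P q := fun q => by ring
        simp only [h1]
        rw [integral_add (f := fun q => G q * (G q - P q)) (g := fun q => G q * P q) (tor_integrable _ (G.continuous.mul (G.continuous.sub P.continuous)))
          (tor_integrable _ (G.continuous.mul P.continuous)), hGspan P hP, add_zero]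
      rw [hsplit]
      have hbound : ∀ q : Tor N, ‖G q * (G q - P q)‖ ≤ ‖G‖ * ε := by
        intro q
        rw [norm_mul]
        have h1 : ‖G q‖ ≤ ‖G‖ := G.norm_coe_le_norm q
        have h2 : ‖G q - P q‖ ≤ ε := by
          have := (G - P).norm_coe_le_norm q
          simp only [ContinuousMap.sub_apply] at this
          linarith
        exact mul_le_mul h1 h2 (norm_nonneg _) (norm_nonneg _)
      calc ‖∫ q, G q * (G q - P q)‖ ≤ (‖G‖ * ε) * (volume (Set.univ : Set (Tor N))).toReal :=
            norm_integral_le_of_norm_le_const (Filter.Eventually.of_forall hbound)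
        _ = ‖G‖ * ε := by rw [measure_univ, ENNReal.toReal_one, mul_one]
    have hpos : 0 < ‖∫ q, G q * G q‖ := norm_pos_iff.mpr hne
    have h1 := hnorm (‖∫ q, G q * G q‖ / (2 * (‖G‖ + 1)))
      (by positivity)
    have hGn : (0:ℝ) ≤ ‖G‖ := norm_nonneg _
    have h2 : ‖G‖ * (‖∫ q, G q * G q‖ / (2 * (‖G‖ + 1)))
        ≤ (‖G‖ + 1) * (‖∫ q, G q * G q‖ / (2 * (‖G‖ + 1))) := by
      apply mul_le_mul_of_nonneg_right (by linarith)
      positivity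
    have h3 : (‖G‖ + 1) * (‖∫ q, G q * G q‖ / (2 * (‖G‖ + 1))) = ‖∫ q, G q * G q‖ / 2 := by
      field_simp
    linarith
  -- Step 5: conclude `F = c₀` everywhere
  have hreal : (∫ q, (F q - c₀)^2) = 0 := by
    have h1 : ∀ q : Tor N, G q * G q = (((F q - c₀)^2 : ℝ) : ℂ) := by
      intro q
      simp only [hG, ContinuousMap.coe_mk]
      push_cast
      ring
    have h2 : (∫ q, G q * G q) = ((∫ q, (F q - c₀)^2 : ℝ) : ℂ) := by
      simp only [h1]
      exact integral_ofReal
    rw [h2] at hGG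
    exact_mod_cast hGG
  have hsq : ∀ q : Tor N, (F q - c₀)^2 = 0 := by
    have hint : Integrable (fun q : Tor N => (F q - c₀)^2) volume :=
      tor_integrable _ (((hFcont.sub continuous_const).pow 2))
    have hae := (integral_eq_zero_iff_of_nonneg_ae
      (Filter.Eventually.of_forall fun q => sq_nonneg _) hint).mp hreal
    have heq : (fun q : Tor N => (F q - c₀)^2) = 0 :=
      (Continuous.ae_eq_iff_eq volume ((hFcont.sub continuous_const).pow 2)
        continuous_const).mp hae
    intro q
    exact congrFun heq q
  have hFc : ∀ q, F q = c₀ := by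
    intro q
    have := hsq q
    nlinarith [sq_nonneg (F q - c₀)]
  intro x y
  rw [← hFπ x, ← hFπ y, hFc, hFc]
end

section
/- Let M be a nonempty compact topological space and let ρ : M × ℝ^p → M be a continuous action of the additive group ℝ^p (ρ(x, 0) = x and ρ(x, s + t) = ρ(ρ(x, s), t)). Let g : M → ℝ be continuous and let α : ℝ^p → ℝ be a linear map. Suppose that for every ξ ∈ ℝ^p and every x ∈ M, the function s ↦ g(ρ(x, sξ)) has derivative α(ξ) at s = 0. Then α = 0. (Injectivity of the map (ι_ρ)_* : H¹(𝔤) → H¹(F) on first cohomology for actions on closed manifolds, in the case G = ℝ^p: if the leafwise 1-form ι_ρ(α) is exact, i.e. equals d_F g, then α = 0, because g is bounded while α(ξ)·T = g(Φ_ξ^T(x)) − g(x) for all T.) -/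
/-- Injectivity of `(ι_ρ)_* : H¹(𝔤) → H¹(F)` for `G = ℝ^p` on a closed manifold:
if the constant leafwise 1-form `ι_ρ(α)` is the leafwise differential of a continuous
function `g`, i.e. `g` has derivative `α(ξ)` along every orbit direction `ξ`,
then `α = 0`. -/
theorem linear_form_zero_of_exact {M : Type*} [TopologicalSpace M]
    [CompactSpace M] [Nonempty M] {p : ℕ}
    (ρ : M × (Fin p → ℝ) → M)
    (hρcont : Continuous ρ)
    (hρ0 : ∀ x : M, ρ (x, 0) = x)
    (hρadd : ∀ (x : M) (s t : Fin p → ℝ), ρ (x, s + t) = ρ (ρ (x, s), t))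
    (g : M → ℝ) (hg : Continuous g)
    (α : (Fin p → ℝ) →ₗ[ℝ] ℝ)
    (hderiv : ∀ (ξ : Fin p → ℝ) (x : M),
      HasDerivAt (fun s : ℝ => g (ρ (x, s • ξ))) (α ξ) 0) :
    α = 0 := by
  -- bound on g
  obtain ⟨C, hC⟩ : ∃ C, ∀ y : M, |g y| ≤ C := by
    obtain ⟨C, hC⟩ := (isCompact_range (hg.abs)).bddAbove
    exact ⟨C, fun y => hC ⟨y, rfl⟩⟩
  apply LinearMap.ext
  intro ξ
  obtain ⟨x⟩ := ‹Nonempty M›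
  set f : ℝ → ℝ := fun s => g (ρ (x, s • ξ)) with hf
  have hfd : ∀ t : ℝ, HasDerivAt f (α ξ) t := by
    intro t
    have h1 : HasDerivAt (fun s : ℝ => s - t) 1 t := by
      simpa using (hasDerivAt_id t).sub_const t
    have h2 := (hderiv ξ (ρ (x, t • ξ)))
    have h3 : HasDerivAt ((fun s : ℝ => g (ρ (ρ (x, t • ξ), s • ξ))) ∘ (fun s : ℝ => s - t))
        (α ξ * 1) t := by
      apply HasDerivAt.comp
      · simpa using h2
      · exact h1
    have heq : ((fun s : ℝ => g (ρ (ρ (x, t • ξ), s • ξ))) ∘ (fun s : ℝ => s - t)) = f := by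
      funext s
      simp only [Function.comp, hf]
      rw [← hρadd]
      congr 2
      rw [← add_smul]
      ring_nf
    rw [heq, mul_one] at h3
    exact h3
  have key : ∀ t : ℝ, f t - α ξ * t = f 0 := by
    have hz : ∀ u : ℝ, HasDerivAt (fun s => f s - α ξ * s) 0 u := by
      intro u
      have h := ((hfd u).sub ((hasDerivAt_id u).const_mul (α ξ)) :
        HasDerivAt (fun s => f s - α ξ * s) (α ξ - α ξ * 1) u)
      rwa [mul_one, sub_self] at h
    intro t
    have := is_const_of_deriv_eq_zero (fun u => (hz u).differentiableAt)
      (fun u => (hz u).deriv) t 0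
    simpa using this
  have hbound : ∀ t : ℝ, |α ξ * t| ≤ 2 * C := by
    intro t
    have : α ξ * t = f t - f 0 := by have := key t; linarith
    rw [this]
    calc |f t - f 0| ≤ |f t| + |f 0| := abs_sub _ _
      _ ≤ C + C := add_le_add (hC _) (hC _)
      _ = 2 * C := by ring
  show α ξ = 0
  by_contra hne
  have hpos : |α ξ| > 0 := abs_pos.mpr hne
  have h2C : (0:ℝ) ≤ 2 * C := by have := hbound 0; simp at this; linarith
  have := hbound ((2 * C + 1) / |α ξ|)
  rw [abs_mul, abs_of_nonneg (by positivity : (0:ℝ) ≤ (2 * C + 1) / |α ξ|),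
    mul_div_cancel₀ _ (ne_of_gt hpos)] at this
  linarith
end
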